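/- arXiv:2411.09509 — 2 statements merged into one kernel-verified Lean document; each statement's English description precedes it below -/
import Mathlib

section
/- Let γ ≠ 0 and let ρ_K, p_K, u_{nK}, u_{tK} (K ∈ {L,R}) be real numbers with ρ̄ ≠ 0, p̄ ≠ 0, and set ā² := γ p̄ / ρ̄ and q_K² := u_{nK}² + u_{tK}². Then the 4-vector (Δρ − Δp/ā², Δ(ρu_n) − Δ(pu_n)/ā², Δ(ρu_t) − Δ(pu_t)/ā², Δ(ρq²)/2 − Δ(pq²)/(2ā²)) equals (Δρ − Δp/ā²)·(1, ū_n, ū_t, q̄²/2) + ((γ−1)/γ) ρ̄ Δu_t·(0, 0, 1, ū_t) + ((γ−1)/γ) ρ̄ Δu_n·(0, 1, 0, ū_n), where q̄² = (q_L²+q_R²)/2 is the arithmetic average of q². In particular, the anti-diffusion term of the HLL-CPS scheme decomposes into a contact-wave part with coefficient δ₂ = 1, a shear-wave part with coefficient δ₃ = (γ−1)/γ, and a face-normal velocity-jump part with coefficient δₙ = (γ−1)/γ. -/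
/-!
Each component has the form `Δ(ρφ) − Δ(pφ)/c` with `φ ∈ {1, u_n, u_t, q²/2}`, and the discrete
product rule `Δ(xφ) = Δx · φ̄ + x̄ · Δφ` splits it as `(Δρ − Δp/c) φ̄ + (ρ̄ − p̄/c) Δφ`; for
`φ = q²/2` one has `Δφ = ū_n Δu_n + ū_t Δu_t`. This holds for every `c`, and for `c = ā²`
the shear coefficient is `ρ̄ − p̄/ā² = ρ̄ − ρ̄/γ = ((γ − 1)/γ) ρ̄`.
-/

theorem antidiffusion_eq_contact_add_shear_add_normal {K : Type*} [Field K] [CharZero K]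
    (ρL ρR pL pR unL unR utL utR c : K) :
    (![(ρR - ρL) - (pR - pL) / c,
       (ρR * unR - ρL * unL) - (pR * unR - pL * unL) / c,
       (ρR * utR - ρL * utL) - (pR * utR - pL * utL) / c,
       (ρR * (unR ^ 2 + utR ^ 2) - ρL * (unL ^ 2 + utL ^ 2)) / 2
         - (pR * (unR ^ 2 + utR ^ 2) - pL * (unL ^ 2 + utL ^ 2)) / (2 * c)] : Fin 4 → K)
    = ((ρR - ρL) - (pR - pL) / c) •
        ![1, (unL + unR) / 2, (utL + utR) / 2,
          ((unL ^ 2 + utL ^ 2 + (unR ^ 2 + utR ^ 2)) / 2) / 2]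
      + (((ρL + ρR) / 2 - (pL + pR) / 2 / c) * (utR - utL)) • ![0, 0, 1, (utL + utR) / 2]
      + (((ρL + ρR) / 2 - (pL + pR) / 2 / c) * (unR - unL)) • ![0, 1, 0, (unL + unR) / 2] := by
  funext i
  fin_cases i <;>
    simp only [Fin.zero_eta, Fin.mk_one, Fin.reduceFinMk, Matrix.cons_val, Pi.add_apply,
      Pi.smul_apply, smul_eq_mul] <;>
    ring

theorem sub_div_mul_div_eq_sub_one_div_mul {K : Type*} [Field K] {γ ρ p : K} (hγ : γ ≠ 0)
    (hp : p ≠ 0) : ρ - p / (γ * p / ρ) = (γ - 1) / γ * ρ := by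
  rw [div_div_eq_mul_div, mul_comm p ρ, mul_div_mul_right _ _ hp]
  field_simp

theorem hllcps_antidiffusion_decomposition_general
    (γ ρL ρR pL pR unL unR utL utR : ℝ) (hγ : γ ≠ 0)
    (hp : (pL + pR) / 2 ≠ 0)
    (a2 qL2 qR2 : ℝ)
    (ha2 : a2 = γ * ((pL + pR) / 2) / ((ρL + ρR) / 2))
    (hqL : qL2 = unL ^ 2 + utL ^ 2) (hqR : qR2 = unR ^ 2 + utR ^ 2) :
    (![(ρR - ρL) - (pR - pL) / a2,
       (ρR * unR - ρL * unL) - (pR * unR - pL * unL) / a2,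
       (ρR * utR - ρL * utL) - (pR * utR - pL * utL) / a2,
       (ρR * qR2 - ρL * qL2) / 2 - (pR * qR2 - pL * qL2) / (2 * a2)] : Fin 4 → ℝ)
    = ((ρR - ρL) - (pR - pL) / a2) •
        ![1, (unL + unR) / 2, (utL + utR) / 2, ((qL2 + qR2) / 2) / 2]
      + (((γ - 1) / γ) * ((ρL + ρR) / 2) * (utR - utL)) •
        ![0, 0, 1, (utL + utR) / 2]
      + (((γ - 1) / γ) * ((ρL + ρR) / 2) * (unR - unL)) •
        ![0, 1, 0, (unL + unR) / 2] := by
  subst hqL hqR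
  rw [antidiffusion_eq_contact_add_shear_add_normal, ha2,
    sub_div_mul_div_eq_sub_one_div_mul hγ hp]

/-- The anti-diffusion term of the HLL-CPS scheme decomposes into a contact-wave
part (coefficient `δ₂ = 1`), a shear-wave part (coefficient `δ₃ = (γ−1)/γ`) and a
face-normal velocity-jump part (coefficient `δₙ = (γ−1)/γ`). -/
theorem hllcps_antidiffusion_decomposition
    (γ ρL ρR pL pR unL unR utL utR : ℝ) (hγ : γ ≠ 0)
    (hρ : (ρL + ρR) / 2 ≠ 0) (hp : (pL + pR) / 2 ≠ 0)
    (a2 qL2 qR2 : ℝ)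
    (ha2 : a2 = γ * ((pL + pR) / 2) / ((ρL + ρR) / 2))
    (hqL : qL2 = unL ^ 2 + utL ^ 2) (hqR : qR2 = unR ^ 2 + utR ^ 2) :
    (![(ρR - ρL) - (pR - pL) / a2,
       (ρR * unR - ρL * unL) - (pR * unR - pL * unL) / a2,
       (ρR * utR - ρL * utL) - (pR * utR - pL * utL) / a2,
       (ρR * qR2 - ρL * qL2) / 2 - (pR * qR2 - pL * qL2) / (2 * a2)] : Fin 4 → ℝ)
    = ((ρR - ρL) - (pR - pL) / a2) •
        ![1, (unL + unR) / 2, (utL + utR) / 2, ((qL2 + qR2) / 2) / 2]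
      + (((γ - 1) / γ) * ((ρL + ρR) / 2) * (utR - utL)) •
        ![0, 0, 1, (utL + utR) / 2]
      + (((γ - 1) / γ) * ((ρL + ρR) / 2) * (unR - unL)) •
        ![0, 1, 0, (unL + unR) / 2] :=
  hllcps_antidiffusion_decomposition_general γ ρL ρR pL pR unL unR utL utR hγ hp a2 qL2 qR2 ha2 hqL
    hqR
end

section
/- Let γ > 1 and let left/right states have u_{nL} = u_{nR} = 0, u_{tL} = u_{tR} = u_t, p_L = p_R = p > 0, and arbitrary densities ρ_L, ρ_R > 0. Let S_L < 0 < S_R be the wave speeds, ā² = γ p̄ / ρ̄ with arithmetic averages p̄ = p and ρ̄ = (ρ_L+ρ_R)/2. Then the HLL-CPS interface flux equals (0, p, 0, 0), which is the exact Euler flux of the stationary contact discontinuity; i.e., the HLL-CPS scheme resolves a stationary contact discontinuity exactly. -/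
/-!
Across a contact discontinuity pressure and velocity are continuous, so every difference in
the pressure-diffusion term of HLL-CPS vanishes and the pressure part
`(S_R F₂ - S_L F₂)/(S_R - S_L)` collapses to `F₂`. In the upwind convective part the Mach
number `ū_n/(ū_n - S_L)` times the speed `u_n - S_L` is just `u_n`, so the scheme returns
`u_n U + F₂`, which is the exact Euler flux of the upwind state. For the stationary contact
`u_n = 0` this is `(0, p, 0, 0)`.
-/

/-- The HLL-CPS flux (Zha–Bilgen splitting) at an interface, for states
`(ρ, p, u_n, u_t)` on each side, wave speeds `S_L, S_R`, and interface sound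
speed `ā² = γ p̄ / ρ̄` built from arithmetic averages. -/
noncomputable def hllcpsFlux (γ SL SR ρL ρR pL pR unL unR utL utR : ℝ) :
    Fin 4 → ℝ :=
  let unbar := (unL + unR) / 2
  let a2 := γ * ((pL + pR) / 2) / ((ρL + ρR) / 2)
  let qL2 := unL ^ 2 + utL ^ 2
  let qR2 := unR ^ 2 + utR ^ 2
  let rEL := pL / (γ - 1) + ρL * qL2 / 2
  let rER := pR / (γ - 1) + ρR * qR2 / 2
  let conv : Fin 4 → ℝ :=
    if 0 ≤ unbar then
      (unbar / (unbar - SL) * (unL - SL)) • ![ρL, ρL * unL, ρL * utL, rEL]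
    else
      (unbar / (unbar - SR) * (unR - SR)) • ![ρR, ρR * unR, ρR * utR, rER]
  let F2L : Fin 4 → ℝ := ![0, pL, 0, pL * unL]
  let F2R : Fin 4 → ℝ := ![0, pR, 0, pR * unR]
  conv + (SR - SL)⁻¹ • (SR • F2L - SL • F2R)
    + (SR * SL / (SR - SL)) •
        ![(pR - pL) / a2, (pR * unR - pL * unL) / a2, (pR * utR - pL * utL) / a2,
          (pR - pL) / (γ - 1) + (pR * qR2 - pL * qL2) / (2 * a2)]

noncomputable def totalEnergyDensity (γ ρ p un ut : ℝ) : ℝ :=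
  p / (γ - 1) + ρ * (un ^ 2 + ut ^ 2) / 2

noncomputable def eulerNormalFlux (γ ρ p un ut : ℝ) : Fin 4 → ℝ :=
  ![ρ * un, ρ * un ^ 2 + p, ρ * un * ut, (totalEnergyDensity γ ρ p un ut + p) * un]

theorem eulerNormalFlux_eq_convective_add_pressure (γ ρ p un ut : ℝ) :
    eulerNormalFlux γ ρ p un ut =
      un • ![ρ, ρ * un, ρ * ut, totalEnergyDensity γ ρ p un ut] + ![0, p, 0, p * un] := by
  ext i
  fin_cases i <;> simp [eulerNormalFlux] <;> ring

theorem inv_sub_smul_sub_smul_self {K V : Type*} [Field K] [AddCommGroup V] [Module K V]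
    {a b : K} (hab : a ≠ b) (v : V) : (b - a)⁻¹ • (b • v - a • v) = v := by
  rw [← sub_smul, smul_smul, inv_mul_cancel₀ (sub_ne_zero.mpr hab.symm), one_smul]

theorem hllcpsFlux_contact_eq_eulerNormalFlux_of_nonneg (γ SL SR ρL ρR p un ut : ℝ)
    (hun : 0 ≤ un) (hSLun : SL ≠ un) (hSLR : SL ≠ SR) :
    hllcpsFlux γ SL SR ρL ρR p p un un ut ut = eulerNormalFlux γ ρL p un ut := by
  have hunbar : (un + un) / 2 = un := by ring
  have hmach : un / (un - SL) * (un - SL) = un := div_mul_cancel₀ un (sub_ne_zero.mpr hSLun.symm)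
  simp only [hllcpsFlux, hunbar, if_pos hun, hmach, sub_self, zero_div, add_zero,
    ← Matrix.zero_empty, Matrix.cons_zero_zero, smul_zero,
    inv_sub_smul_sub_smul_self hSLR, eulerNormalFlux_eq_convective_add_pressure,
    totalEnergyDensity]

theorem hllcps_resolves_stationary_contact_general
    (γ p ut ρL ρR SL SR : ℝ) (hSL : SL < 0) (hSR : 0 < SR) :
    hllcpsFlux γ SL SR ρL ρR p p 0 0 ut ut = ![0, p, 0, 0] := by
  rw [hllcpsFlux_contact_eq_eulerNormalFlux_of_nonneg γ SL SR ρL ρR p 0 ut le_rfl hSL.ne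
    (by linarith)]
  ext i
  fin_cases i <;> simp [eulerNormalFlux]

/-- The HLL-CPS scheme resolves a stationary contact discontinuity exactly:
for `u_{nL} = u_{nR} = 0`, equal tangential velocities and equal pressures,
the interface flux is the exact Euler flux `(0, p, 0, 0)`. -/
theorem hllcps_resolves_stationary_contact
    (γ p ut ρL ρR SL SR : ℝ) (hγ : 1 < γ) (hp : 0 < p)
    (hρL : 0 < ρL) (hρR : 0 < ρR) (hSL : SL < 0) (hSR : 0 < SR) :
    hllcpsFlux γ SL SR ρL ρR p p 0 0 ut ut = ![0, p, 0, 0] :=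
  hllcps_resolves_stationary_contact_general γ p ut ρL ρR SL SR hSL hSR
end
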